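/- In the 9-node fitted NSCLC Boolean network (where BMI1' = (\neg p53A \wedge \neg p53K) \vee E2F1 and all other rules unchanged), the synchronous dynamics has exactly the same three fixed points as the original 9-node network, and the states u = (1,0,0,0,0,1,0,0,0), v = (1,0,0,0,0,1,1,1,0) no longer form a 2-cycle (indeed F(u) \neq v). -/
import Mathlib

/-- States: (miR145, Sp1, MALAT1, BMI1, KLF4, p53, p53A, p53K, E2F1). -/
abbrev B9 := Bool × Bool × Bool × Bool × Bool × Bool × Bool × Bool × Bool

/-- Synchronous map of the fitted 9-node NSCLC Boolean network, where the rule for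
BMI1 has been replaced by `(!p53A ∧ !p53K) ∨ E2F1`. -/
def F9fit : B9 → B9 :=
  fun (miR145, sp1, malat1, bmi1, klf4, p53, p53A, p53K, e2f1) =>
    (p53 && !malat1 && !bmi1,
     bmi1 || !miR145,
     sp1,
     (!p53A && !p53K) || e2f1,
     !miR145 || (e2f1 && p53),
     !klf4 || !malat1,
     !p53K && p53,
     !p53A && p53,
     malat1)

set_option synthInstance.maxSize 2000 in
set_option maxHeartbeats 1000000 in
/-- The fitted network has exactly the same three fixed points as the original
9-node network, and the states `u = (1,0,0,0,0,1,0,0,0)`, `v = (1,0,0,0,0,1,1,1,0)`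
no longer form a 2-cycle: indeed `F u ≠ v`. -/
theorem fitted_nine_node :
    (∀ x : B9, F9fit x = x ↔
      x = (false, true, true, true, true, false, false, false, true) ∨
      x = (true, false, false, false, false, true, false, true, false) ∨
      x = (true, false, false, false, false, true, true, false, false)) ∧
    F9fit (true, false, false, false, false, true, false, false, false) ≠
      (true, false, false, false, false, true, true, true, false) := by
  refine ⟨?_, by decide⟩
  intro x
  obtain ⟨a,b,c,d,e,f,g,h,i⟩ := x
  revert a b c d e f g h i
  decide
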